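/- arXiv:2510.06120 — 3 statements merged into one kernel-verified Lean document; each statement's English description precedes it below -/
import Mathlib

section
/- Let a ∈ ℝ with |a| < 1, let δ ∈ (0, min((1-a)/3, 1/2)), and let C > 0. Suppose b : [0, ∞) → ℝ is continuous with |b(t)| ≤ C(1 + t^{3/4}) for all t ≥ 0. Define p(t) := exp(-a·t - b(t)), w(t) := exp(-(a+1)·t - b(t)), and ϖ(t) := ∫₀ᵗ 1/p(s) ds. Then ∫₀^∞ ϖ(t)² · w(t) dt < ∞ and ∫₀^∞ w(t) dt < ∞. -/
open Set MeasureTheory Real Filter Asymptotics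

/-!
Write `β(t) = C (1 + t^{3/4})` and `a⁺ = (a + |a|) / 2`. On `[0, t]` the integrand `1 / p` is at most
`exp (a⁺ t + β(t))`, so `ϖ(t)² w(t) ≤ t² exp ((2a⁺ - a - 1) t + 3β(t)) = t² exp (-(1 - |a|) t + 3β(t))`,
and likewise `w(t) ≤ exp (-(1 - |a|) t + β(t))`. Since `β(t) = o(t)`, both are `O(exp (-(1 - |a|) t / 2))`,
hence integrable on `(0, ∞)`.
-/

theorem eventually_mul_one_add_rpow_le (C : ℝ) {r c : ℝ} (hr : r < 1) (hc : 0 < c) :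
    ∀ᶠ t in atTop, C * (1 + t ^ r) ≤ c * t := by
  have hrpow : (fun t : ℝ => t ^ r) =o[atTop] id := by
    have h0 : (fun t : ℝ => t ^ (r - 1)) =o[atTop] fun _ => (1 : ℝ) := by
      rw [isLittleO_one_iff]
      simpa using tendsto_rpow_neg_atTop (sub_pos.2 hr)
    refine (h0.mul_isBigO (isBigO_refl id atTop)).congr' ?_ (.of_forall fun t => one_mul t)
    filter_upwards [eventually_gt_atTop 0] with t ht
    simp [rpow_sub_one ht.ne', ht.ne']
  have hlin := (((isLittleO_const_id_atTop (1 : ℝ)).add hrpow).const_mul_left C).bound hc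
  filter_upwards [hlin, eventually_ge_atTop 0] with t ht ht0
  simpa [abs_of_nonneg ht0] using (le_abs_self _).trans ht

theorem exp_neg_mul_add_isBigO {ε c : ℝ} {g : ℝ → ℝ} (hg : ∀ᶠ t in atTop, g t ≤ c * t) :
    (fun t => exp (-(ε * t) + g t)) =O[atTop] fun t => exp (-(ε - c) * t) := by
  refine IsBigO.of_bound' ?_
  filter_upwards [hg] with t ht
  simp only [norm_eq_abs, abs_exp, exp_le_exp]
  linarith

theorem sq_mul_exp_neg_mul_add_isBigO {ε : ℝ} (hε : 0 < ε) {g : ℝ → ℝ}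
    (hg : ∀ᶠ t in atTop, g t ≤ ε / 4 * t) :
    (fun t => t ^ 2 * exp (-(ε * t) + g t)) =O[atTop] fun t => exp (-(ε / 2) * t) := by
  refine ((isLittleO_pow_exp_pos_mul_atTop 2 (by positivity : 0 < ε / 4)).isBigO.mul
    (exp_neg_mul_add_isBigO hg)).congr_right fun t => ?_
  rw [← exp_add]
  ring_nf

theorem integral_exp_mul_add_le {f : ℝ → ℝ} (hf : Continuous f) {a t B : ℝ} (ht : 0 ≤ t)
    (hB : ∀ s ∈ Icc 0 t, f s ≤ B) :
    ∫ s in (0 : ℝ)..t, exp (a * s + f s) ≤ t * exp ((a + |a|) / 2 * t + B) := by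
  have hle : ∀ s ∈ Icc 0 t, exp (a * s + f s) ≤ exp ((a + |a|) / 2 * t + B) := by
    intro s hs
    have hpos : 0 ≤ (a + |a|) / 2 := by linarith [neg_abs_le a]
    have : a * s ≤ (a + |a|) / 2 * t := by
      nlinarith [le_abs_self a, hs.1, hs.2, mul_le_mul_of_nonneg_left hs.2 hpos]
    exact exp_le_exp.2 (by linarith [hB s hs])
  calc ∫ s in (0 : ℝ)..t, exp (a * s + f s)
      ≤ ∫ _ in (0 : ℝ)..t, exp ((a + |a|) / 2 * t + B) :=
        intervalIntegral.integral_mono_on ht ((by fun_prop : Continuous _).intervalIntegrable 0 t)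
          intervalIntegrable_const hle
    _ = t * exp ((a + |a|) / 2 * t + B) := by simp

theorem exp_neg_mul_sub_le {a t y B : ℝ} (ht : 0 ≤ t) (hy : |y| ≤ B) :
    exp (-((a + 1) * t) - y) ≤ exp (-((1 - |a|) * t) + B) :=
  exp_le_exp.2 (by nlinarith [neg_abs_le a, neg_le_abs y])

theorem sq_integral_exp_mul_exp_le {f : ℝ → ℝ} (hf : Continuous f) {a t B : ℝ} (ht : 0 ≤ t)
    (hB : ∀ s ∈ Icc 0 t, |f s| ≤ B) :
    (∫ s in (0 : ℝ)..t, exp (a * s + f s)) ^ 2 * exp (-((a + 1) * t) - f t) ≤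
      t ^ 2 * exp (-((1 - |a|) * t) + 3 * B) := by
  have hI := integral_exp_mul_add_le hf (a := a) ht fun s hs => (le_abs_self _).trans (hB s hs)
  have hI0 : 0 ≤ ∫ s in (0 : ℝ)..t, exp (a * s + f s) :=
    intervalIntegral.integral_nonneg ht fun s _ => (exp_pos _).le
  have hft : -f t ≤ B := (neg_le_abs _).trans (hB t ⟨ht, le_rfl⟩)
  calc (∫ s in (0 : ℝ)..t, exp (a * s + f s)) ^ 2 * exp (-((a + 1) * t) - f t)
      ≤ (t * exp ((a + |a|) / 2 * t + B)) ^ 2 * exp (-((a + 1) * t) + B) := by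
        gcongr
        linarith
    _ = t ^ 2 * exp (-((1 - |a|) * t) + 3 * B) := by
        rw [mul_pow, ← exp_nat_mul, mul_assoc, ← exp_add]
        ring_nf

theorem stmt2_general (a C : ℝ) (ha : |a| < 1) (hC : 0 < C)
    (b : ℝ → ℝ) (hb : Continuous b)
    (hbound : ∀ t : ℝ, 0 ≤ t → |b t| ≤ C * (1 + t ^ ((3 : ℝ) / 4)))
    (p w ϖ : ℝ → ℝ)
    (hp : ∀ t, p t = Real.exp (-(a * t) - b t))
    (hw : ∀ t, w t = Real.exp (-((a + 1) * t) - b t))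
    (hϖ : ∀ t, ϖ t = ∫ s in (0 : ℝ)..t, 1 / p s) :
    MeasureTheory.IntegrableOn (fun t => (ϖ t) ^ 2 * w t) (Set.Ioi 0)
        MeasureTheory.volume ∧
      MeasureTheory.IntegrableOn w (Set.Ioi 0) MeasureTheory.volume := by
  set ε := 1 - |a|
  have hε : 0 < ε := sub_pos.2 ha
  have hϖ' : ϖ = fun t => ∫ s in (0 : ℝ)..t, exp (a * s + b s) := by
    ext t
    simp only [hϖ, hp, one_div, ← exp_neg, neg_sub, sub_neg_eq_add, add_comm]
  have hw' : w = fun t => exp (-((a + 1) * t) - b t) := funext hw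
  have henv : ∀ t, 0 ≤ t → ∀ s ∈ Icc 0 t, |b s| ≤ C * (1 + t ^ ((3 : ℝ) / 4)) :=
    fun t _ s hs => (hbound s hs.1).trans (by gcongr; exacts [hs.1, hs.2])
  subst hϖ' hw'
  have hwO : (fun t => exp (-((a + 1) * t) - b t)) =O[atTop] fun t => exp (-(ε - ε / 2) * t) := by
    refine (IsBigO.of_bound' ?_).trans (exp_neg_mul_add_isBigO (ε := ε)
      (eventually_mul_one_add_rpow_le C (by norm_num : (3 : ℝ) / 4 < 1) (half_pos hε)))
    filter_upwards [eventually_ge_atTop 0] with t ht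
    rw [norm_of_nonneg (exp_pos _).le, norm_of_nonneg (exp_pos _).le]
    exact exp_neg_mul_sub_le ht (henv t ht t ⟨ht, le_rfl⟩)
  have hϖwO : (fun t => (∫ s in (0 : ℝ)..t, exp (a * s + b s)) ^ 2 *
      exp (-((a + 1) * t) - b t)) =O[atTop] fun t => exp (-(ε / 2) * t) := by
    refine (IsBigO.of_bound' ?_).trans (sq_mul_exp_neg_mul_add_isBigO hε
      (eventually_mul_one_add_rpow_le (3 * C) (by norm_num : (3 : ℝ) / 4 < 1) (by positivity)))
    filter_upwards [eventually_ge_atTop 0] with t ht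
    rw [norm_of_nonneg (by positivity), norm_of_nonneg (by positivity), mul_assoc 3 C]
    exact sq_integral_exp_mul_exp_le hb ht (henv t ht)
  have hcont : Continuous fun t => ∫ s in (0 : ℝ)..t, exp (a * s + b s) :=
    intervalIntegral.continuous_primitive
      (fun _ _ => (by fun_prop : Continuous _).intervalIntegrable _ _) 0
  exact ⟨integrable_of_isBigO_exp_neg (half_pos hε) (by fun_prop) hϖwO,
    integrable_of_isBigO_exp_neg (by linarith) (by fun_prop) hwO⟩

/-- Deterministic limit-circle estimate for `|a| < 1`: both `ϖ²·w` and `w` are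
integrable on `(0,∞)`, where `p(t) = exp(-at - b(t))`, `w(t) = exp(-(a+1)t - b(t))`,
`ϖ(t) = ∫₀ᵗ 1/p`, and `|b(t)| ≤ C(1+t^{3/4})`. -/
theorem stmt2 (a δ C : ℝ) (ha : |a| < 1)
    (hδ : δ ∈ Set.Ioo (0 : ℝ) (min ((1 - a) / 3) (1 / 2))) (hC : 0 < C)
    (b : ℝ → ℝ) (hb : Continuous b)
    (hbound : ∀ t : ℝ, 0 ≤ t → |b t| ≤ C * (1 + t ^ ((3 : ℝ) / 4)))
    (p w ϖ : ℝ → ℝ)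
    (hp : ∀ t, p t = Real.exp (-(a * t) - b t))
    (hw : ∀ t, w t = Real.exp (-((a + 1) * t) - b t))
    (hϖ : ∀ t, ϖ t = ∫ s in (0 : ℝ)..t, 1 / p s) :
    MeasureTheory.IntegrableOn (fun t => (ϖ t) ^ 2 * w t) (Set.Ioi 0)
        MeasureTheory.volume ∧
      MeasureTheory.IntegrableOn w (Set.Ioi 0) MeasureTheory.volume :=
  stmt2_general a C ha hC b hb hbound p w ϖ hp hw hϖ
end

section
/- Let a > 1, let δ ∈ (0, min((a-1)/3, 1/2)), and let C > 0. Suppose b : [0, ∞) → ℝ is continuous with |b(t)| ≤ C(1 + t^{3/4}) for all t ≥ 0. Define p(t) := exp(-a·t - b(t)), w(t) := exp(-(a+1)·t - b(t)), and ϖ(t) := ∫₀ᵗ 1/p(s) ds. Then ∫₀^∞ ϖ(t)² · w(t) dt = ∞. -/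
open Set MeasureTheory Filter Topology

/-!
With `B t = C (1 + t ^ (3/4))` we have `|b| ≤ B` and `B` increasing, so the integrand of `ϖ t`
is at least `exp (a (t - 1) - B t)` on the last unit interval `[t - 1, t]`, while
`w t ≥ exp (-(a + 1) t - B t)`. Hence `ϖ t ^ 2 * w t ≥ exp ((a - 1) t - 3 B t - 2 a)`, and this
exponent tends to `+∞` because `a > 1` and `t ^ (3/4) = o(t)`. An integrand that is eventually
`≥ 1` has infinite integral over a half-line.
-/

theorem tendsto_mul_sub_mul_rpow_atTop {κ D r : ℝ} (hκ : 0 < κ) (hr : r < 1) :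
    Tendsto (fun t => κ * t - D * t ^ r) atTop atTop := by
  have hdecay : Tendsto (fun t : ℝ => κ - D * t ^ (-(1 - r))) atTop (𝓝 κ) := by
    simpa using ((tendsto_rpow_neg_atTop (sub_pos.2 hr)).const_mul D).const_sub κ
  refine (tendsto_id.atTop_mul_pos hκ hdecay).congr' ?_
  filter_upwards [eventually_gt_atTop 0] with t ht
  rw [show t ^ r = t ^ (1 + -(1 - r)) by ring_nf, Real.rpow_add ht, Real.rpow_one, id]
  ring

theorem le_intervalIntegral_of_le_on_Icc_sub_one {f : ℝ → ℝ} {t K : ℝ} (ht : 1 ≤ t)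
    (hf : IntervalIntegrable f volume 0 t) (hf₀ : ∀ s ∈ Icc 0 t, 0 ≤ f s)
    (hK : ∀ s ∈ Icc (t - 1) t, K ≤ f s) : K ≤ ∫ s in 0..t, f s := by
  have hmid : t - 1 ∈ uIcc 0 t := by rw [uIcc_of_le (by linarith)]; constructor <;> linarith
  have hf_tail := hf.mono_set (uIcc_subset_uIcc_right hmid)
  rw [← intervalIntegral.integral_add_adjacent_intervals
    (hf.mono_set (uIcc_subset_uIcc_left hmid)) hf_tail]
  have hhead : 0 ≤ ∫ s in 0..t - 1, f s :=
    intervalIntegral.integral_nonneg (by linarith) fun s hs =>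
      hf₀ s ⟨hs.1, by linarith [hs.2]⟩
  have htail : K ≤ ∫ s in t - 1..t, f s := by
    simpa using intervalIntegral.integral_mono_on (by linarith) intervalIntegrable_const hf_tail hK
  linarith

theorem exp_le_intervalIntegral_exp {f : ℝ → ℝ} (hf : Continuous f) {t m : ℝ} (ht : 1 ≤ t)
    (hm : ∀ s ∈ Icc (t - 1) t, m ≤ f s) : Real.exp m ≤ ∫ s in 0..t, Real.exp (f s) :=
  le_intervalIntegral_of_le_on_Icc_sub_one ht
    ((by fun_prop : Continuous _).intervalIntegrable _ _) (fun s _ => (Real.exp_pos _).le)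
    fun s hs => Real.exp_le_exp.2 (hm s hs)

theorem lintegral_Ioi_ofReal_eq_top_of_eventually_le {f : ℝ → ℝ} {c : ℝ} (hc : 0 < c)
    (hf : ∀ᶠ t in atTop, c ≤ f t) (x : ℝ) : ∫⁻ t in Ioi x, ENNReal.ofReal (f t) = ⊤ := by
  obtain ⟨T, hT⟩ := eventually_atTop.1 hf
  refine top_unique ?_
  calc (⊤ : ENNReal) = ∫⁻ _ in Ioi (max T x), ENNReal.ofReal c := by
        simp [Real.volume_Ioi, hc]
    _ ≤ ∫⁻ t in Ioi (max T x), ENNReal.ofReal (f t) :=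
        setLIntegral_mono' measurableSet_Ioi fun t ht =>
          ENNReal.ofReal_le_ofReal (hT t ((le_max_left T x).trans ht.le))
    _ ≤ ∫⁻ t in Ioi x, ENNReal.ofReal (f t) :=
        lintegral_mono_set (Ioi_subset_Ioi (le_max_right T x))

theorem stmt3_general (a C : ℝ) (ha : 1 < a) (hC : 0 < C)
    (b : ℝ → ℝ) (hb : Continuous b)
    (hbound : ∀ t : ℝ, 0 ≤ t → |b t| ≤ C * (1 + t ^ ((3 : ℝ) / 4)))
    (p w ϖ : ℝ → ℝ)
    (hp : ∀ t, p t = Real.exp (-(a * t) - b t))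
    (hw : ∀ t, w t = Real.exp (-((a + 1) * t) - b t))
    (hϖ : ∀ t, ϖ t = ∫ s in (0 : ℝ)..t, 1 / p s) :
    ∫⁻ t in Set.Ioi (0 : ℝ), ENNReal.ofReal ((ϖ t) ^ 2 * w t) = ⊤ := by
  set B : ℝ → ℝ := fun t => C * (1 + t ^ ((3 : ℝ) / 4)) with hB
  have hB_mono : MonotoneOn B (Ici 0) := fun s hs t _ hst => by
    have := Real.rpow_le_rpow hs hst (by norm_num : (0 : ℝ) ≤ 3 / 4)
    simp only [hB]; gcongr
  have hϖ_lower (t : ℝ) (ht : 1 ≤ t) : Real.exp (a * (t - 1) - B t) ≤ ϖ t := by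
    simp only [hϖ, hp, one_div, ← Real.exp_neg, neg_sub, sub_neg_eq_add]
    refine exp_le_intervalIntegral_exp (by fun_prop) ht fun s hs => ?_
    have hs₀ : 0 ≤ s := by linarith [hs.1]
    linarith [(abs_le.1 (hbound s hs₀)).1, hB_mono hs₀ (by linarith : (0 : ℝ) ≤ t) hs.2,
      mul_le_mul_of_nonneg_left hs.1 (by linarith : 0 ≤ a)]
  have hw_lower (t : ℝ) (ht : 0 ≤ t) : Real.exp (-((a + 1) * t) - B t) ≤ w t :=
    (hw t).symm ▸ Real.exp_le_exp.2 (by linarith [(abs_le.1 (hbound t ht)).2])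
  have hexponent : ∀ᶠ t in atTop,
      0 ≤ (a - 1) * t - 3 * C * t ^ ((3 : ℝ) / 4) - (2 * a + 3 * C) :=
    (tendsto_atTop_add_const_right _ _ (tendsto_mul_sub_mul_rpow_atTop (by linarith)
      (by norm_num))).eventually_ge_atTop 0
  refine lintegral_Ioi_ofReal_eq_top_of_eventually_le one_pos ?_ 0
  filter_upwards [hexponent, eventually_ge_atTop 1] with t hexp ht
  calc 1 ≤ Real.exp (a * (t - 1) - B t) ^ 2 * Real.exp (-((a + 1) * t) - B t) := by
        rw [sq, ← Real.exp_add, ← Real.exp_add]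
        exact Real.one_le_exp (by simp only [hB]; linarith)
    _ ≤ ϖ t ^ 2 * w t := by
        gcongr ?_ ^ 2 * ?_
        exacts [hϖ_lower t ht, hw_lower t (by linarith)]

/-- Deterministic limit-point estimate for `a > 1`: `∫₀^∞ ϖ(t)²·w(t) dt = ∞`. -/
theorem stmt3 (a δ C : ℝ) (ha : 1 < a)
    (hδ : δ ∈ Set.Ioo (0 : ℝ) (min ((a - 1) / 3) (1 / 2))) (hC : 0 < C)
    (b : ℝ → ℝ) (hb : Continuous b)
    (hbound : ∀ t : ℝ, 0 ≤ t → |b t| ≤ C * (1 + t ^ ((3 : ℝ) / 4)))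
    (p w ϖ : ℝ → ℝ)
    (hp : ∀ t, p t = Real.exp (-(a * t) - b t))
    (hw : ∀ t, w t = Real.exp (-((a + 1) * t) - b t))
    (hϖ : ∀ t, ϖ t = ∫ s in (0 : ℝ)..t, 1 / p s) :
    ∫⁻ t in Set.Ioi (0 : ℝ), ENNReal.ofReal ((ϖ t) ^ 2 * w t) = ⊤ :=
  stmt3_general a C ha hC b hb hbound p w ϖ hp hw hϖ
end

section
/- Let b : [0, ∞) → ℝ be continuous, let β > 0, and suppose there is a strictly increasing sequence (τ_k) of nonnegative reals with τ_{k+1} ≥ τ_k + 2 such that |b(t)| ≤ 1 for all t ∈ [τ_k, τ_k + 1] and all k. Define p(t) := exp(-t - (2/√β)·b(t)), w(t) := exp(-2t - (2/√β)·b(t)), and ϖ(t) := ∫₀ᵗ 1/p(s) ds. Then ∫₀^∞ ϖ(t)² · w(t) dt ≥ Σ_{k=1}^∞ (1/2)·e^{-6/√β}·(e^{1/2} - 1)²·(e^{-1} - e^{-2}) = ∞. -/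
open Set MeasureTheory

open Real

/-!
Write `c = 2 / √β ≥ 0`, so that `1 / p s = exp (s + c b s)`. On `[τ_k, τ_k + 1]` we have
`|c b| ≤ c`, hence for `t ∈ [τ_k + 1/2, τ_k + 1]` the integrand is bounded below by a constant
independent of `k`: `ϖ t ≥ ∫_{τ_k}^t e^{s - c} ds ≥ e^{τ_k - c} (e^{1/2} - 1)` and
`w t ≥ e^{-2 τ_k - 2 - c}`, whose product is `e^{-3c - 2} (e^{1/2} - 1)²`; the factors
`e^{± 2 τ_k}` cancel exactly. Since these intervals are disjoint and have length `1/2`,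
the integral diverges.
-/

namespace MeasureTheory

theorem setLIntegral_eq_top_of_pairwise_disjoint {α : Type*} [MeasurableSpace α]
    {μ : Measure α} {f : α → ENNReal} {s : Set α} {I : ℕ → Set α}
    (hI : ∀ k, MeasurableSet (I k)) (hdisj : Pairwise (Function.onFun Disjoint I))
    (hsub : ∀ k, I k ⊆ s)
    {c : ENNReal} (hc : c ≠ 0) (hle : ∀ k, c ≤ ∫⁻ x in I k, f x ∂μ) :
    ∫⁻ x in s, f x ∂μ = ⊤ :=
  top_unique <| calc
    ⊤ = ∑' _ : ℕ, c := (ENNReal.tsum_const_eq_top_of_ne_zero hc).symm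
    _ ≤ ∑' k, ∫⁻ x in I k, f x ∂μ := ENNReal.tsum_le_tsum hle
    _ = ∫⁻ x in ⋃ k, I k, f x ∂μ := (lintegral_iUnion hI hdisj f).symm
    _ ≤ ∫⁻ x in s, f x ∂μ := lintegral_mono_set (iUnion_subset hsub)

end MeasureTheory

theorem pairwise_disjoint_Ioc_add_of_add_le {σ : ℕ → ℝ} {L : ℝ} (hL : 0 ≤ L)
    (hgap : ∀ k, σ k + L ≤ σ (k + 1)) :
    Pairwise (Function.onFun Disjoint fun k => Ioc (σ k) (σ k + L)) := by
  have hmono : Monotone σ := monotone_nat_of_le_succ fun k => by linarith [hgap k]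
  exact hmono.pairwise_disjoint_on_Ioc_succ.mono fun i j h =>
    h.mono (Ioc_subset_Ioc_right (hgap i)) (Ioc_subset_Ioc_right (hgap j))

theorem lintegral_Ioi_ofReal_eq_top {f : ℝ → ℝ} {σ : ℕ → ℝ} {L C : ℝ} (hL : 0 < L)
    (hC : 0 < C) (hσ0 : ∀ k, 0 ≤ σ k) (hgap : ∀ k, σ k + L ≤ σ (k + 1))
    (hf : ∀ k, ∀ t ∈ Ioc (σ k) (σ k + L), C ≤ f t) :
    ∫⁻ t in Ioi 0, ENNReal.ofReal (f t) = ⊤ := by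
  refine setLIntegral_eq_top_of_pairwise_disjoint (fun _ => measurableSet_Ioc)
    (pairwise_disjoint_Ioc_add_of_add_le hL.le hgap)
    (fun k t ht => lt_of_le_of_lt (hσ0 k) ht.1) (c := ENNReal.ofReal (C * L))
    (by simp [mul_pos hC hL]) fun k => ?_
  calc ENNReal.ofReal (C * L) = ∫⁻ _ in Ioc (σ k) (σ k + L), ENNReal.ofReal C := by
        rw [setLIntegral_const, Real.volume_Ioc, add_sub_cancel_left,
          ENNReal.ofReal_mul hC.le]
    _ ≤ ∫⁻ t in Ioc (σ k) (σ k + L), ENNReal.ofReal (f t) :=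
        setLIntegral_mono' measurableSet_Ioc fun t ht => ENNReal.ofReal_le_ofReal (hf k t ht)

theorem abs_mul_le_of_abs_le_one {c x : ℝ} (hc : 0 ≤ c) (hx : |x| ≤ 1) : |c * x| ≤ c := by
  rw [abs_mul, abs_of_nonneg hc]
  exact mul_le_of_le_one_right hc hx

theorem exp_neg_mul_sub_le_integral {f : ℝ → ℝ} {c u t : ℝ} (hut : u ≤ t)
    (hfi : IntervalIntegrable f volume u t) (hf : ∀ s ∈ Icc u t, exp (s - c) ≤ f s) :
    exp (-c) * (exp t - exp u) ≤ ∫ s in u..t, f s :=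
  calc exp (-c) * (exp t - exp u) = ∫ s in u..t, exp (s - c) := by
        rw [intervalIntegral.integral_comp_sub_right exp c, integral_exp, sub_eq_add_neg t,
          sub_eq_add_neg u, exp_add, exp_add]
        ring
    _ ≤ ∫ s in u..t, f s := by
        refine intervalIntegral.integral_mono_on hut (Continuous.intervalIntegrable ?_ _ _) hfi hf
        fun_prop

theorem exp_mul_sq_le_sq_integral_mul_exp {b : ℝ → ℝ} (hb : Continuous b) {c τ t : ℝ}
    (hc : 0 ≤ c) (hτ : 0 ≤ τ) (hbτ : ∀ s ∈ Icc τ (τ + 1), |b s| ≤ 1)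
    (ht : t ∈ Icc (τ + 1 / 2) (τ + 1)) :
    exp (-(3 * c) - 2) * (exp (1 / 2) - 1) ^ 2
      ≤ (∫ s in 0..t, exp (s + c * b s)) ^ 2 * exp (-(2 * t) - c * b t) := by
  have hτt : τ ≤ t := by linarith [ht.1]
  have hcb : ∀ s ∈ Icc τ t, -c ≤ c * b s ∧ c * b s ≤ c := fun s hs =>
    abs_le.mp (abs_mul_le_of_abs_le_one hc (hbτ s ⟨hs.1, hs.2.trans ht.2⟩))
  have hF : Continuous fun s => exp (s + c * b s) := by fun_prop
  have hexp_half : 0 ≤ exp (1 / 2) - 1 := sub_nonneg.mpr (one_le_exp one_half_pos.le)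
  have hϖ : exp (τ - c) * (exp (1 / 2) - 1) ≤ ∫ s in 0..t, exp (s + c * b s) :=
    calc exp (τ - c) * (exp (1 / 2) - 1) = exp (-c) * (exp (τ + 1 / 2) - exp τ) := by
          rw [sub_eq_neg_add, exp_add, exp_add]
          ring
      _ ≤ exp (-c) * (exp t - exp τ) := by gcongr; exact ht.1
      _ ≤ ∫ s in τ..t, exp (s + c * b s) :=
          exp_neg_mul_sub_le_integral hτt (hF.intervalIntegrable _ _) fun s hs =>
            exp_le_exp.mpr (by linarith [(hcb s hs).1])
      _ ≤ ∫ s in 0..t, exp (s + c * b s) :=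
          intervalIntegral.integral_mono_interval hτ hτt le_rfl
            (Filter.Eventually.of_forall fun s => (exp_pos _).le) (hF.intervalIntegrable _ _)
  have hw : exp (-(2 * τ) - 2 - c) ≤ exp (-(2 * t) - c * b t) :=
    exp_le_exp.mpr (by linarith [(hcb t ⟨hτt, le_rfl⟩).2, ht.2])
  calc exp (-(3 * c) - 2) * (exp (1 / 2) - 1) ^ 2
        = (exp (τ - c) * (exp (1 / 2) - 1)) ^ 2 * exp (-(2 * τ) - 2 - c) := by
          rw [mul_pow, mul_right_comm, sq (exp _), ← exp_add, ← exp_add]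
          ring_nf
    _ ≤ (∫ s in 0..t, exp (s + c * b s)) ^ 2 * exp (-(2 * t) - c * b t) := by
          gcongr

theorem stmt4_general (β : ℝ) (b : ℝ → ℝ) (hb : Continuous b)
    (τ : ℕ → ℝ) (hτ0 : ∀ k, 0 ≤ τ k) (hτgap : ∀ k, τ k + 2 ≤ τ (k + 1))
    (hbsmall : ∀ k, ∀ t ∈ Set.Icc (τ k) (τ k + 1), |b t| ≤ 1)
    (p w ϖ : ℝ → ℝ)
    (hp : ∀ t, p t = Real.exp (-t - (2 / Real.sqrt β) * b t))
    (hw : ∀ t, w t = Real.exp (-(2 * t) - (2 / Real.sqrt β) * b t))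
    (hϖ : ∀ t, ϖ t = ∫ s in (0 : ℝ)..t, 1 / p s) :
    ∫⁻ t in Set.Ioi (0 : ℝ), ENNReal.ofReal ((ϖ t) ^ 2 * w t) = ⊤ := by
  set c := 2 / sqrt β
  have hinv_p : ∀ s, 1 / p s = exp (s + c * b s) := fun s => by
    rw [hp, one_div, ← exp_neg]
    ring_nf
  have hC : 0 < exp (-(3 * c) - 2) * (exp (1 / 2) - 1) ^ 2 :=
    mul_pos (exp_pos _) (pow_pos (sub_pos.mpr (one_lt_exp_iff.mpr one_half_pos)) 2)
  simp only [hϖ, hinv_p, hw]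
  exact lintegral_Ioi_ofReal_eq_top (σ := fun k => τ k + 1 / 2) one_half_pos hC
    (fun k => by linarith [hτ0 k]) (fun k => by linarith [hτgap k]) fun k t ht =>
      exp_mul_sq_le_sq_integral_mul_exp hb (by positivity) (hτ0 k) (hbsmall k)
        ⟨ht.1.le, by linarith [ht.2]⟩

/-- Critical case `a = 1`: if `b` is bounded by `1` on infinitely many unit intervals
`[τ_k, τ_k + 1]` with `τ_{k+1} ≥ τ_k + 2`, then `∫₀^∞ ϖ(t)²·w(t) dt = ∞`, where
`p(t) = exp(-t - (2/√β) b(t))`, `w(t) = exp(-2t - (2/√β) b(t))`, `ϖ(t) = ∫₀ᵗ 1/p`. -/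
theorem stmt4 (β : ℝ) (hβ : 0 < β) (b : ℝ → ℝ) (hb : Continuous b)
    (τ : ℕ → ℝ) (hτ0 : ∀ k, 0 ≤ τ k) (hτgap : ∀ k, τ k + 2 ≤ τ (k + 1))
    (hτmono : StrictMono τ)
    (hbsmall : ∀ k, ∀ t ∈ Set.Icc (τ k) (τ k + 1), |b t| ≤ 1)
    (p w ϖ : ℝ → ℝ)
    (hp : ∀ t, p t = Real.exp (-t - (2 / Real.sqrt β) * b t))
    (hw : ∀ t, w t = Real.exp (-(2 * t) - (2 / Real.sqrt β) * b t))
    (hϖ : ∀ t, ϖ t = ∫ s in (0 : ℝ)..t, 1 / p s) :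
    ∫⁻ t in Set.Ioi (0 : ℝ), ENNReal.ofReal ((ϖ t) ^ 2 * w t) = ⊤ :=
  stmt4_general β b hb τ hτ0 hτgap hbsmall p w ϖ hp hw hϖ
end
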